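/- There exist constants C > 0 and M > 0 such that |r^stat(a) - (a + 1/2 - log a)| ≤ C·a^{-1} for all a > M; i.e., r^stat(a) = a + 1/2 - log a + O(a^{-1}) as a → ∞. -/
import Mathlib


open Real

/-- The upper tail rate function for the stationary initial condition. -/
noncomputable def rStat (a : ℝ) : ℝ :=
  -a ^ 2 / 4 + (1 + a / 2) * Real.sqrt (a + a ^ 2 / 4) +
    Real.log (1 + a / 2 - Real.sqrt (a + a ^ 2 / 4))

set_option maxHeartbeats 1000000 in
theorem stmt_17 :
    ∃ C > (0 : ℝ), ∃ M > (0 : ℝ), ∀ a : ℝ, M < a →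
      |rStat a - (a + 1 / 2 - Real.log a)| ≤ C * a⁻¹ := by
  refine ⟨3, by norm_num, 1, by norm_num, fun a ha => ?_⟩
  have ha0 : (0:ℝ) < a := by linarith
  have hnn : (0:ℝ) ≤ a + a ^ 2 / 4 := by nlinarith
  set s := Real.sqrt (a + a ^ 2 / 4) with hsdef
  have hs0 : 0 ≤ s := Real.sqrt_nonneg _
  have hs2 : s ^ 2 = a + a ^ 2 / 4 := Real.sq_sqrt hnn
  have hub : s < a / 2 + 1 := by nlinarith
  have hlb : a / 2 < s := by nlinarith
  have hpos : 0 < 1 + a / 2 - s := by linarith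
  have hsum : 0 < 1 + a / 2 + s := by linarith
  have hinv : 1 + a / 2 - s = (1 + a / 2 + s)⁻¹ := by
    have h0 : (1 + a / 2 + s) ≠ 0 := ne_of_gt hsum
    field_simp
    nlinarith
  have hlog1 : Real.log (1 + a / 2 - s) = - Real.log (1 + a / 2 + s) := by
    rw [hinv, Real.log_inv]
  have hL : Real.log ((1 + a / 2 + s) / a) = Real.log (1 + a / 2 + s) - Real.log a :=
    Real.log_div (by linarith) (by linarith)
  have hq1 : (1:ℝ) ≤ (1 + a / 2 + s) / a := by
    rw [le_div_iff₀ ha0]; linarith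
  have hLnn : 0 ≤ Real.log ((1 + a / 2 + s) / a) := Real.log_nonneg hq1
  have hLub : Real.log ((1 + a / 2 + s) / a) ≤ 2 / a := by
    have h1 := Real.log_le_sub_one_of_pos (show (0:ℝ) < (1 + a / 2 + s) / a by positivity)
    have h2 : (1 + a / 2 + s) / a - 1 ≤ 2 / a := by
      rw [div_sub_one (ne_of_gt ha0), div_le_div_iff₀ ha0 ha0]
      nlinarith
    linarith
  have key : rStat a - (a + 1 / 2 - Real.log a) =
      -((1 + a / 2) - s) ^ 2 / 2 - Real.log ((1 + a / 2 + s) / a) := by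
    rw [rStat, ← hsdef, hlog1, hL]
    linear_combination hs2 / 2
  have hds : 0 < 1 + a / 2 - s := hpos
  have hprod : (1 + a / 2 - s) * (1 + a / 2 + s) = 1 := by nlinarith
  have had : a * (1 + a / 2 - s) ≤ 1 := by
    nlinarith [mul_lt_mul_of_pos_right (show a < 1 + a / 2 + s by linarith) hds]
  have hd1 : 1 + a / 2 - s ≤ 1 := by nlinarith
  have hhalf : ((1 + a / 2) - s) ^ 2 / 2 ≤ 1 / a := by
    rw [div_le_div_iff₀ (by norm_num) ha0]
    nlinarith [mul_le_mul_of_nonneg_right had (le_of_lt hds)]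
  rw [key]
  have hE : -((1 + a / 2) - s) ^ 2 / 2 ≤ 0 := by nlinarith [sq_nonneg (1 + a / 2 - s)]
  rw [abs_of_nonpos (by linarith)]
  have h3 : (3:ℝ) * a⁻¹ = 1 / a + 2 / a := by ring
  linarith
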